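/- The conflation connective is not definable in BD^{→,⊥,−}: there is no formula A built from a single propositional variable p and the connectives ¬, ∧, ∨, →, ⊥ such that for every valuation ν in M^{BD,→,⊥,−}, ν(A) = −̂(ν(p)), where −̂ swaps b and n and fixes t and f. Equivalently, −̂ is not a matrix function of M^{BD,→,⊥} (it fails to preserve the subsets {t, f, b} and {t, f, n}). Consequently BD^{→,⊥} is not truth-functionally complete. -/
import Mathlib


namespace BD13

/-- The four truth values of Belnap-Dunn logic:
`t` (true), `f` (false), `b` (both true and false), `n` (neither true nor false). -/
inductive V4 : Type
  | t | f | b | n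
deriving DecidableEq, Repr

namespace V4

/-- `a` lies above truth in the Belnap-Dunn bilattice (i.e. `a ∈ {t, b}`). -/
def hasT : V4 → Bool
  | t => true
  | b => true
  | _ => false

/-- `a` lies above falsity in the Belnap-Dunn bilattice (i.e. `a ∈ {f, b}`). -/
def hasF : V4 → Bool
  | f => true
  | b => true
  | _ => false

def ofTF : Bool → Bool → V4
  | true, true => b
  | true, false => t
  | false, true => f
  | false, false => n

/-- Interpretation of ¬: swaps `t` and `f`, fixes `b` and `n`. -/
def neg4 : V4 → V4
  | t => f
  | f => t
  | b => b
  | n => n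

/-- Interpretation of ∧: greatest lower bound in the lattice order on `V4`
with `f` least, `t` greatest, `b` and `n` incomparable. -/
def and4 (x y : V4) : V4 := ofTF (x.hasT && y.hasT) (x.hasF || y.hasF)

/-- Interpretation of ∨: least upper bound in the lattice order on `V4`
with `f` least, `t` greatest, `b` and `n` incomparable. -/
def or4 (x y : V4) : V4 := ofTF (x.hasT || y.hasT) (x.hasF && y.hasF)

/-- Interpretation of →: `a₁ → a₂ = t` if `a₁ ∉ {t, b}`, and `a₂` otherwise. -/
def imp4 (x y : V4) : V4 := if x = t ∨ x = b then y else t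

/-- The designated truth values: `t` and `b`. -/
def desig (x : V4) : Prop := x = t ∨ x = b

end V4

/-- Formulas of the expansion BD^{→,⊥} of Belnap-Dunn logic,
over the connectives ¬, ∧, ∨, →, ⊥. -/
inductive Fm : Type
  | var : ℕ → Fm
  | neg : Fm → Fm
  | and : Fm → Fm → Fm
  | or : Fm → Fm → Fm
  | imp : Fm → Fm → Fm
  | bot : Fm
deriving DecidableEq

/-- The valuation in the matrix `M^{BD,→,⊥}` determined by an assignment of
truth values to the propositional variables. -/
def val (v : ℕ → V4) : Fm → V4
  | .var p => v p
  | .neg A => V4.neg4 (val v A)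
  | .and A B => V4.and4 (val v A) (val v B)
  | .or A B => V4.or4 (val v A) (val v B)
  | .imp A B => V4.imp4 (val v A) (val v B)
  | .bot => V4.f

/-- The set of propositional variables occurring in a formula. -/
def fvars : Fm → Set ℕ
  | .var p => {p}
  | .neg A => fvars A
  | .and A B => fvars A ∪ fvars B
  | .or A B => fvars A ∪ fvars B
  | .imp A B => fvars A ∪ fvars B
  | .bot => ∅

/-- The matrix functions of `M^{BD,→,⊥}`: the functions on the truth values
obtainable by composition from projections and the truth functions of
¬, ∧, ∨, →, ⊥. -/
inductive IsMF : {k : ℕ} → ((Fin k → V4) → V4) → Prop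
  | proj {k : ℕ} (i : Fin k) : IsMF (fun a => a i)
  | bot {k : ℕ} : IsMF (fun _ : Fin k → V4 => V4.f)
  | neg {k : ℕ} {g : (Fin k → V4) → V4} :
      IsMF g → IsMF (fun a => V4.neg4 (g a))
  | and {k : ℕ} {g h : (Fin k → V4) → V4} :
      IsMF g → IsMF h → IsMF (fun a => V4.and4 (g a) (h a))
  | or {k : ℕ} {g h : (Fin k → V4) → V4} :
      IsMF g → IsMF h → IsMF (fun a => V4.or4 (g a) (h a))
  | imp {k : ℕ} {g h : (Fin k → V4) → V4} :
      IsMF g → IsMF h → IsMF (fun a => V4.imp4 (g a) (h a))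

/-- Interpretation of the conflation connective −: swaps `b` and `n`,
fixes `t` and `f`. -/
def confV : V4 → V4
  | .b => .n
  | .n => .b
  | .t => .t
  | .f => .f


instance : Fintype V4 :=
  ⟨{.t, .f, .b, .n}, by intro x; cases x <;> simp⟩

lemma notn_neg : ∀ x : V4, x ≠ .n → V4.neg4 x ≠ .n := by decide
lemma notn_and : ∀ x y : V4, x ≠ .n → y ≠ .n → V4.and4 x y ≠ .n := by decide
lemma notn_or : ∀ x y : V4, x ≠ .n → y ≠ .n → V4.or4 x y ≠ .n := by decide
lemma notn_imp : ∀ x y : V4, x ≠ .n → y ≠ .n → V4.imp4 x y ≠ .n := by decide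

lemma val_notn (A : Fm) (v : ℕ → V4) (hv : ∀ p, v p ≠ .n) : val v A ≠ .n := by
  induction A with
  | var p => exact hv p
  | neg A ih => exact notn_neg _ ih
  | and A B ihA ihB => exact notn_and _ _ ihA ihB
  | or A B ihA ihB => exact notn_or _ _ ihA ihB
  | imp A B ihA ihB => exact notn_imp _ _ ihA ihB
  | bot => simp [val]

lemma mf_notn {k : ℕ} {g : (Fin k → V4) → V4} (hg : IsMF g)
    (a : Fin k → V4) (ha : ∀ i, a i ≠ .n) : g a ≠ .n := by
  induction hg with
  | proj i => exact ha i
  | bot => simp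
  | neg _ ih => exact notn_neg _ ih
  | and _ _ ih1 ih2 => exact notn_and _ _ ih1 ih2
  | or _ _ ih1 ih2 => exact notn_or _ _ ih1 ih2
  | imp _ _ ih1 ih2 => exact notn_imp _ _ ih1 ih2

/-- the conflation connective is not definable in BD^{→,⊥,−}:
there is no formula built from a single propositional variable `p` and the
connectives ¬, ∧, ∨, →, ⊥ whose value under every valuation is the conflation
of the value of `p`; equivalently, conflation is not a matrix function of
`M^{BD,→,⊥}`; consequently BD^{→,⊥} is not truth-functionally complete. -/
theorem stmt13 :
    (∀ p : ℕ, ¬ ∃ A : Fm, fvars A ⊆ {p} ∧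
        ∀ v : ℕ → V4, val v A = confV (v p)) ∧
    (¬ IsMF (fun a : Fin 1 → V4 => confV (a 0))) ∧
    (¬ ∀ (k : ℕ) (g : (Fin k → V4) → V4), IsMF g) := by
  refine ⟨?_, ?_, ?_⟩
  · intro p ⟨A, _, hA⟩
    have := val_notn A (fun _ => .b) (fun _ => by simp)
    rw [hA (fun _ => .b)] at this
    exact this rfl
  · intro h
    have := mf_notn h (fun _ => .b) (fun _ => by simp)
    exact this rfl
  · intro h
    have := mf_notn (h 1 (fun a => confV (a 0))) (fun _ => .b) (fun _ => by simp)
    exact this rfl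

end BD13
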